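/- arXiv:2106.10657 — 3 statements merged into one kernel-verified Lean document; each statement's English description precedes it below -/
import Mathlib

section
/- Let H : ℝⁿ × ℝⁿ × ℝ → ℝ be a smooth function and let x(t) = (q(t), p(t), s(t)) be a differentiable solution of the contact Hamiltonian equations for H on an interval [0, T]. Then for every t ∈ [0, T] one has H(x(t)) = H(x(0)) · exp(−∫₀ᵗ (∂H/∂s)(x(u)) du). In particular, if H(x(0)) = 0 then H(x(t)) = 0 for all t ∈ [0, T], and the sign of H(x(t)) (positive, negative, or zero) is constant along the solution, so the level set {H = 0} separates the phase space into invariant regions. -/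
/-- Partial derivative of `H` with respect to the `i`-th position coordinate `qᵢ`. -/
noncomputable def Hq (n : ℕ) (H : (Fin n → ℝ) → (Fin n → ℝ) → ℝ → ℝ)
    (i : Fin n) (q p : Fin n → ℝ) (s : ℝ) : ℝ :=
  deriv (fun x => H (Function.update q i x) p s) (q i)

/-- Partial derivative of `H` with respect to the `i`-th momentum coordinate `pᵢ`. -/
noncomputable def Hp (n : ℕ) (H : (Fin n → ℝ) → (Fin n → ℝ) → ℝ → ℝ)
    (i : Fin n) (q p : Fin n → ℝ) (s : ℝ) : ℝ :=
  deriv (fun x => H q (Function.update p i x) s) (p i)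

/-- Partial derivative of `H` with respect to the action coordinate `s`. -/
noncomputable def Hs (n : ℕ) (H : (Fin n → ℝ) → (Fin n → ℝ) → ℝ → ℝ)
    (q p : Fin n → ℝ) (s : ℝ) : ℝ :=
  deriv (fun x => H q p x) s

section Aux

variable {n : ℕ} {H : (Fin n → ℝ) → (Fin n → ℝ) → ℝ → ℝ}

lemma hq_eq_fderiv
    (hd : Differentiable ℝ fun x : (Fin n → ℝ) × (Fin n → ℝ) × ℝ => H x.1 x.2.1 x.2.2)
    (i : Fin n) (q p : Fin n → ℝ) (s : ℝ) :
    Hq n H i q p s = fderiv ℝ (fun x : (Fin n → ℝ) × (Fin n → ℝ) × ℝ => H x.1 x.2.1 x.2.2)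
      (q, p, s) ((Pi.single i 1 : Fin n → ℝ), 0, 0) := by
  have hg : HasDerivAt (fun x : ℝ => ((Function.update q i x : Fin n → ℝ), p, s))
      ((Pi.single i 1 : Fin n → ℝ), (0 : Fin n → ℝ), (0 : ℝ)) (q i) :=
    HasDerivAt.prodMk (hasDerivAt_update q i (q i)) (HasDerivAt.prodMk (hasDerivAt_const _ _) (hasDerivAt_const _ _))
  have h1 := (hd (Function.update q i (q i), p, s)).hasFDerivAt.comp_hasDerivAt (q i) hg
  rw [Function.update_eq_self] at h1
  exact h1.deriv

lemma hp_eq_fderiv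
    (hd : Differentiable ℝ fun x : (Fin n → ℝ) × (Fin n → ℝ) × ℝ => H x.1 x.2.1 x.2.2)
    (i : Fin n) (q p : Fin n → ℝ) (s : ℝ) :
    Hp n H i q p s = fderiv ℝ (fun x : (Fin n → ℝ) × (Fin n → ℝ) × ℝ => H x.1 x.2.1 x.2.2)
      (q, p, s) (0, (Pi.single i 1 : Fin n → ℝ), 0) := by
  have hg : HasDerivAt (fun x : ℝ => (q, (Function.update p i x : Fin n → ℝ), s))
      ((0 : Fin n → ℝ), (Pi.single i 1 : Fin n → ℝ), (0 : ℝ)) (p i) :=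
    HasDerivAt.prodMk (hasDerivAt_const _ _) (HasDerivAt.prodMk (hasDerivAt_update p i (p i)) (hasDerivAt_const _ _))
  have h1 := (hd (q, Function.update p i (p i), s)).hasFDerivAt.comp_hasDerivAt (p i) hg
  rw [Function.update_eq_self] at h1
  exact h1.deriv

lemma hs_eq_fderiv
    (hd : Differentiable ℝ fun x : (Fin n → ℝ) × (Fin n → ℝ) × ℝ => H x.1 x.2.1 x.2.2)
    (q p : Fin n → ℝ) (s : ℝ) :
    Hs n H q p s = fderiv ℝ (fun x : (Fin n → ℝ) × (Fin n → ℝ) × ℝ => H x.1 x.2.1 x.2.2)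
      (q, p, s) (0, 0, (1 : ℝ)) := by
  have hg : HasDerivAt (fun x : ℝ => (q, p, x))
      ((0 : Fin n → ℝ), (0 : Fin n → ℝ), (1 : ℝ)) s :=
    HasDerivAt.prodMk (hasDerivAt_const _ _) (HasDerivAt.prodMk (hasDerivAt_const _ _) (hasDerivAt_id s))
  have h1 := (hd (q, p, s)).hasFDerivAt.comp_hasDerivAt s hg
  exact h1.deriv

/-- decomposition of a tangent vector into basis directions. -/
lemma vec_decomp (a b : Fin n → ℝ) (c : ℝ) :
    ((a, b, c) : (Fin n → ℝ) × (Fin n → ℝ) × ℝ) =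
      (∑ i, a i • (((Pi.single i 1 : Fin n → ℝ), 0, 0) : (Fin n → ℝ) × (Fin n → ℝ) × ℝ)) +
      (∑ i, b i • ((0, (Pi.single i 1 : Fin n → ℝ), 0) : (Fin n → ℝ) × (Fin n → ℝ) × ℝ)) +
      c • ((0, 0, (1 : ℝ)) : (Fin n → ℝ) × (Fin n → ℝ) × ℝ) := by
  have ha : ∀ v : Fin n → ℝ, ∑ i, v i • (Pi.single i 1 : Fin n → ℝ) = v := by
    intro v
    have : ∀ i : Fin n, v i • (Pi.single i 1 : Fin n → ℝ) = Pi.single i (v i) := by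
      intro i
      ext j
      by_cases h : j = i
      · subst h; simp
      · simp [Pi.single_eq_of_ne h]
    simp only [this]
    exact Finset.univ_sum_single v
  refine Prod.ext ?_ (Prod.ext ?_ ?_)
  · simp [Prod.fst_sum, ha]
  · simp [Prod.fst_sum, Prod.snd_sum, ha]
  · simp [Prod.snd_sum]

end Aux

/-- Along any solution `x(t) = (q(t),p(t),s(t))` of the contact Hamiltonian equations on
`[0,T]` one has `H(x(t)) = H(x(0)) · exp(−∫₀ᵗ ∂H/∂s(x(u)) du)`; in particular if
`H(x(0)) = 0` then `H(x(t)) = 0` for all `t`, and the sign of `H(x(t))` is constant. -/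
theorem contact_hamiltonian_exponential_decay_and_invariant_sign
    (n : ℕ) (H : (Fin n → ℝ) → (Fin n → ℝ) → ℝ → ℝ)
    (hH : ContDiff ℝ (⊤ : ℕ∞) fun x : (Fin n → ℝ) × (Fin n → ℝ) × ℝ => H x.1 x.2.1 x.2.2)
    (T : ℝ) (hT : 0 ≤ T) (q p : ℝ → Fin n → ℝ) (s : ℝ → ℝ)
    (hq : ∀ t ∈ Set.Icc 0 T, ∀ i,
      HasDerivAt (fun u => q u i) (Hp n H i (q t) (p t) (s t)) t)
    (hp : ∀ t ∈ Set.Icc 0 T, ∀ i, HasDerivAt (fun u => p u i)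
      (-(Hq n H i (q t) (p t) (s t)) - p t i * Hs n H (q t) (p t) (s t)) t)
    (hs : ∀ t ∈ Set.Icc 0 T, HasDerivAt s
      (∑ i, p t i * Hp n H i (q t) (p t) (s t) - H (q t) (p t) (s t)) t) :
    (∀ t ∈ Set.Icc 0 T, H (q t) (p t) (s t) =
      H (q 0) (p 0) (s 0) * Real.exp (-(∫ u in (0 : ℝ)..t, Hs n H (q u) (p u) (s u)))) ∧
    (H (q 0) (p 0) (s 0) = 0 → ∀ t ∈ Set.Icc 0 T, H (q t) (p t) (s t) = 0) ∧
    (∀ t ∈ Set.Icc 0 T,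
      (0 < H (q 0) (p 0) (s 0) → 0 < H (q t) (p t) (s t)) ∧
      (H (q 0) (p 0) (s 0) < 0 → H (q t) (p t) (s t) < 0) ∧
      (H (q 0) (p 0) (s 0) = 0 → H (q t) (p t) (s t) = 0)) := by
  classical
  set F : (Fin n → ℝ) × (Fin n → ℝ) × ℝ → ℝ := fun x => H x.1 x.2.1 x.2.2 with hF
  have hd : Differentiable ℝ F := hH.differentiable (by simp)
  set h : ℝ → ℝ := fun t => H (q t) (p t) (s t) with hh
  set f : ℝ → ℝ := fun u => Hs n H (q u) (p u) (s u) with hf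
  set I : ℝ → ℝ := fun t => ∫ u in (0 : ℝ)..t, f u with hI
  -- derivative of the solution curve
  have hx : ∀ t ∈ Set.Icc (0:ℝ) T, HasDerivAt (fun u => (q u, p u, s u))
      ((fun i => Hp n H i (q t) (p t) (s t),
        fun i => -(Hq n H i (q t) (p t) (s t)) - p t i * Hs n H (q t) (p t) (s t),
        ∑ i, p t i * Hp n H i (q t) (p t) (s t) - H (q t) (p t) (s t)) :
        (Fin n → ℝ) × (Fin n → ℝ) × ℝ) t := by
    intro t ht
    exact HasDerivAt.prodMk (hasDerivAt_pi.2 (hq t ht)) (HasDerivAt.prodMk (hasDerivAt_pi.2 (hp t ht)) (hs t ht))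
  -- key: h'(t) = -Hs · h(t)
  have key : ∀ t ∈ Set.Icc (0:ℝ) T, HasDerivAt h (-(f t) * h t) t := by
    intro t ht
    have hcomp := (hd (q t, p t, s t)).hasFDerivAt.comp_hasDerivAt t (hx t ht)
    set L := fderiv ℝ F (q t, p t, s t) with hL
    set A : Fin n → ℝ := fun i => Hq n H i (q t) (p t) (s t) with hA
    set B : Fin n → ℝ := fun i => Hp n H i (q t) (p t) (s t) with hB
    set C : ℝ := Hs n H (q t) (p t) (s t) with hC
    have hLval : L ((fun i => B i, fun i => -(A i) - p t i * C,
        ∑ i, p t i * B i - H (q t) (p t) (s t)) :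
        (Fin n → ℝ) × (Fin n → ℝ) × ℝ) = -(C) * h t := by
      rw [vec_decomp]
      rw [map_add, map_add, map_sum, map_sum, map_smul]
      simp only [map_smul, smul_eq_mul]
      have hAi : ∀ i, L ((Pi.single i 1 : Fin n → ℝ), 0, 0) = A i := fun i =>
        (hq_eq_fderiv hd i (q t) (p t) (s t)).symm
      have hBi : ∀ i, L (0, (Pi.single i 1 : Fin n → ℝ), 0) = B i := fun i =>
        (hp_eq_fderiv hd i (q t) (p t) (s t)).symm
      have hCv : L (0, 0, (1 : ℝ)) = C := (hs_eq_fderiv hd (q t) (p t) (s t)).symm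
      simp only [hAi, hBi, hCv]
      have hzero : (∑ i, B i * A i) + (∑ i, (-(A i) - p t i * C) * B i)
          + (∑ i, p t i * B i * C) = 0 := by
        rw [← Finset.sum_add_distrib, ← Finset.sum_add_distrib]
        exact Finset.sum_eq_zero fun i _ => by ring
      have hsm : (∑ i, p t i * B i - H (q t) (p t) (s t)) * C
          = (∑ i, p t i * B i * C) - H (q t) (p t) (s t) * C := by
        rw [sub_mul, Finset.sum_mul]
      rw [hsm]
      have : h t = H (q t) (p t) (s t) := rfl
      rw [this]
      linarith [hzero]
    have : HasDerivAt h (L ((fun i => B i, fun i => -(A i) - p t i * C,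
        ∑ i, p t i * B i - H (q t) (p t) (s t)) :
        (Fin n → ℝ) × (Fin n → ℝ) × ℝ)) t := hcomp
    rw [hLval] at this
    exact this
  -- continuity facts on [0, T]
  have hx_cont : ContinuousOn (fun u => (q u, p u, s u)) (Set.Icc 0 T) := fun t ht =>
    ((hx t ht).continuousAt).continuousWithinAt
  have hf_cont : ContinuousOn f (Set.Icc 0 T) := by
    have houter : Continuous fun v : (Fin n → ℝ) × (Fin n → ℝ) × ℝ =>
        fderiv ℝ F v ((0 : Fin n → ℝ), (0 : Fin n → ℝ), (1 : ℝ)) :=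
      (hH.continuous_fderiv (by simp)).clm_apply continuous_const
    have : ContinuousOn (fun u =>
        fderiv ℝ F (q u, p u, s u) ((0 : Fin n → ℝ), (0 : Fin n → ℝ), (1 : ℝ)))
        (Set.Icc 0 T) := houter.comp_continuousOn hx_cont
    exact this.congr fun u _ => hs_eq_fderiv hd (q u) (p u) (s u)
  have hh_cont : ContinuousOn h (Set.Icc 0 T) := fun t ht =>
    ((key t ht).continuousAt).continuousWithinAt
  have hf_int : MeasureTheory.IntegrableOn f (Set.Icc 0 T) :=
    hf_cont.integrableOn_Icc
  have hI_cont : ContinuousOn I (Set.Icc 0 T) := by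
    have := intervalIntegral.continuousOn_primitive_interval
      (μ := MeasureTheory.volume) (f := f) (a := (0:ℝ)) (b := T)
      (by rwa [Set.uIcc_of_le hT])
    rwa [Set.uIcc_of_le hT] at this
  set g : ℝ → ℝ := fun t => h t * Real.exp (I t) with hg
  have hg_cont : ContinuousOn g (Set.Icc 0 T) :=
    hh_cont.mul (Real.continuous_exp.comp_continuousOn hI_cont)
  -- right derivative of g is zero on [0, T)
  have hg_deriv : ∀ t ∈ Set.Ico (0:ℝ) T, HasDerivWithinAt g 0 (Set.Ici t) t := by
    intro t ht
    have htIcc : t ∈ Set.Icc (0:ℝ) T := ⟨ht.1, ht.2.le⟩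
    have hmem : Set.Icc (0:ℝ) T ∈ nhdsWithin t (Set.Ioi t) := Icc_mem_nhdsGT_of_mem ht
    have hint : IntervalIntegrable f MeasureTheory.volume 0 t := by
      apply ContinuousOn.intervalIntegrable
      apply hf_cont.mono
      rw [Set.uIcc_of_le ht.1]
      exact Set.Icc_subset_Icc le_rfl ht.2.le
    have hmeas : StronglyMeasurableAtFilter f (nhdsWithin t (Set.Ioi t))
        MeasureTheory.volume :=
      ⟨Set.Icc 0 T, hmem, hf_cont.aestronglyMeasurable measurableSet_Icc⟩
    have hcw : ContinuousWithinAt f (Set.Ioi t) t :=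
      (hf_cont t htIcc).mono_of_mem_nhdsWithin hmem
    have hI' : HasDerivWithinAt I (f t) (Set.Ici t) t :=
      intervalIntegral.integral_hasDerivWithinAt_right hint hmeas hcw
    have hexp : HasDerivWithinAt (fun u => Real.exp (I u))
        (Real.exp (I t) * f t) (Set.Ici t) t :=
      (Real.hasDerivAt_exp (I t)).comp_hasDerivWithinAt t hI'
    have hmul := ((key t htIcc).hasDerivWithinAt (s := Set.Ici t)).mul hexp
    have h0 : -f t * h t * Real.exp (I t) + h t * (Real.exp (I t) * f t) = 0 := by ring
    rw [h0] at hmul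
    exact hmul
  have hconst := constant_of_has_deriv_right_zero hg_cont hg_deriv
  have hg0 : g 0 = h 0 := by
    simp [hg, hI, intervalIntegral.integral_same]
  -- main formula
  have main : ∀ t ∈ Set.Icc (0:ℝ) T, h t = h 0 * Real.exp (-(I t)) := by
    intro t ht
    have h1 : h t * Real.exp (I t) = h 0 := by
      have := hconst t ht
      rw [hg0] at this
      exact this
    calc h t = h t * (Real.exp (I t) * Real.exp (-(I t))) := by
          rw [← Real.exp_add, add_neg_cancel, Real.exp_zero, mul_one]
      _ = (h t * Real.exp (I t)) * Real.exp (-(I t)) := by ring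
      _ = h 0 * Real.exp (-(I t)) := by rw [h1]
  refine ⟨main, ?_, ?_⟩
  · intro h0 t ht
    have := main t ht
    rw [show h 0 = H (q 0) (p 0) (s 0) from rfl, h0] at this
    simpa using this
  · intro t ht
    have hm := main t ht
    refine ⟨fun hpos => ?_, fun hneg => ?_, fun h0 => ?_⟩
    · rw [show H (q t) (p t) (s t) = h t from rfl, hm]
      exact mul_pos hpos (Real.exp_pos _)
    · rw [show H (q t) (p t) (s t) = h t from rfl, hm]
      exact mul_neg_of_neg_of_pos hneg (Real.exp_pos _)
    · rw [show H (q t) (p t) (s t) = h t from rfl, hm,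
        show h 0 = H (q 0) (p 0) (s 0) from rfl, h0, zero_mul]
end

section
/- Let L : ℝ × ℝ × ℝ × ℝ → ℝ be smooth, τ > 0, N ≥ 2, and for a discrete curve q : {0, …, N} → ℝ define s : {0, …, N} → ℝ recursively by s₀ = s_init and s_{k+1} = s_k + τ L(kτ, q_k, q_{k+1}, s_k). Then for every k with 1 ≤ k ≤ N − 1, the partial derivative of s_N with respect to q_k equals τ · (∏_{j=k+1}^{N−1} (1 + τ ∂₄L(jτ, q_j, q_{j+1}, s_j))) · [∂₂L(kτ, q_k, q_{k+1}, s_k) + ∂₃L((k−1)τ, q_{k−1}, q_k, s_{k−1}) · (1 + τ ∂₄L(kτ, q_k, q_{k+1}, s_k))], where ∂ᵢL denotes the partial derivative of L with respect to its i-th argument. -/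
/-- The discrete Herglotz action: `s₀ = sinit`,
`s_{k+1} = s_k + τ L(kτ, q_k, q_{k+1}, s_k)`. -/
noncomputable def discS (τ sinit : ℝ) (L : ℝ → ℝ → ℝ → ℝ → ℝ) (q : ℕ → ℝ) : ℕ → ℝ
  | 0 => sinit
  | k + 1 => discS τ sinit L q k +
      τ * L (k * τ) (q k) (q (k + 1)) (discS τ sinit L q k)

/-- Partial derivative of `L` with respect to its second argument. -/
noncomputable def D2L (L : ℝ → ℝ → ℝ → ℝ → ℝ) (t a b c : ℝ) : ℝ :=
  deriv (fun x => L t x b c) a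

/-- Partial derivative of `L` with respect to its third argument. -/
noncomputable def D3L (L : ℝ → ℝ → ℝ → ℝ → ℝ) (t a b c : ℝ) : ℝ :=
  deriv (fun x => L t a x c) b

/-- Partial derivative of `L` with respect to its fourth argument. -/
noncomputable def D4L (L : ℝ → ℝ → ℝ → ℝ → ℝ) (t a b c : ℝ) : ℝ :=
  deriv (fun x => L t a b x) c

private lemma hasDerivAt_comp4 (F : ℝ × ℝ × ℝ × ℝ → ℝ) (hF : Differentiable ℝ F)
    (t : ℝ) (u v w : ℝ → ℝ) (u' v' w' x : ℝ)
    (hu : HasDerivAt u u' x) (hv : HasDerivAt v v' x) (hw : HasDerivAt w w' x) :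
    HasDerivAt (fun y => F (t, u y, v y, w y))
      (u' * deriv (fun z => F (t, z, v x, w x)) (u x) +
       v' * deriv (fun z => F (t, u x, z, w x)) (v x) +
       w' * deriv (fun z => F (t, u x, v x, z)) (w x)) x := by
  set p : ℝ × ℝ × ℝ × ℝ := (t, u x, v x, w x) with hp
  have hFp : HasFDerivAt F (fderiv ℝ F p) p := (hF p).hasFDerivAt
  have hcurve : HasDerivAt (fun y => ((t, u y, v y, w y) : ℝ × ℝ × ℝ × ℝ))
      (0, u', v', w') x :=
    HasDerivAt.prodMk (hasDerivAt_const x t) (hu.prodMk (hv.prodMk hw))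
  have hmain := hFp.comp_hasDerivAt x hcurve
  have h2 : HasDerivAt (fun z => F (t, z, v x, w x))
      (fderiv ℝ F p ((0 : ℝ), (1 : ℝ), (0 : ℝ), (0 : ℝ))) (u x) :=
    hFp.comp_hasDerivAt (u x)
      (HasDerivAt.prodMk (hasDerivAt_const _ _) (HasDerivAt.prodMk (hasDerivAt_id _)
        (HasDerivAt.prodMk (hasDerivAt_const _ _) (hasDerivAt_const _ _))))
  have h3 : HasDerivAt (fun z => F (t, u x, z, w x))
      (fderiv ℝ F p ((0 : ℝ), (0 : ℝ), (1 : ℝ), (0 : ℝ))) (v x) :=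
    hFp.comp_hasDerivAt (v x)
      (HasDerivAt.prodMk (hasDerivAt_const _ _) (HasDerivAt.prodMk (hasDerivAt_const _ _)
        (HasDerivAt.prodMk (hasDerivAt_id _) (hasDerivAt_const _ _))))
  have h4 : HasDerivAt (fun z => F (t, u x, v x, z))
      (fderiv ℝ F p ((0 : ℝ), (0 : ℝ), (0 : ℝ), (1 : ℝ))) (w x) :=
    hFp.comp_hasDerivAt (w x)
      (HasDerivAt.prodMk (hasDerivAt_const _ _) (HasDerivAt.prodMk (hasDerivAt_const _ _)
        (HasDerivAt.prodMk (hasDerivAt_const _ _) (hasDerivAt_id _))))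
  have hvec : ((0, u', v', w') : ℝ × ℝ × ℝ × ℝ) =
      u' • ((0 : ℝ), (1 : ℝ), (0 : ℝ), (0 : ℝ)) + v' • ((0 : ℝ), (0 : ℝ), (1 : ℝ), (0 : ℝ))
        + w' • ((0 : ℝ), (0 : ℝ), (0 : ℝ), (1 : ℝ)) := by
    simp [Prod.ext_iff]
  have hsum : (fderiv ℝ F p) (0, u', v', w') =
      u' * (fderiv ℝ F p ((0 : ℝ), (1 : ℝ), (0 : ℝ), (0 : ℝ))) +
      v' * (fderiv ℝ F p ((0 : ℝ), (0 : ℝ), (1 : ℝ), (0 : ℝ))) +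
      w' * (fderiv ℝ F p ((0 : ℝ), (0 : ℝ), (0 : ℝ), (1 : ℝ))) := by
    rw [hvec, map_add, map_add, map_smul, map_smul, map_smul,
      smul_eq_mul, smul_eq_mul, smul_eq_mul]
  rw [h2.deriv, h3.deriv, h4.deriv, ← hsum]
  exact hmain

private lemma discS_update_lt (τ sinit : ℝ) (L : ℝ → ℝ → ℝ → ℝ → ℝ) (q : ℕ → ℝ)
    (k : ℕ) (x : ℝ) : ∀ m, m < k →
    discS τ sinit L (Function.update q k x) m = discS τ sinit L q m := by
  intro m
  induction m with
  | zero => intro _; rfl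
  | succ n ih =>
    intro h
    have h1 : n < k := Nat.lt_of_succ_lt h
    simp only [discS, ih h1, Function.update_of_ne (Nat.ne_of_lt h1),
      Function.update_of_ne (Nat.ne_of_lt h)]

/-- Formula for the partial derivative of the discrete Herglotz action `s_N` with
respect to an interior point `q_k` of the discrete curve:
`∂s_N/∂q_k = τ · (∏_{j=k+1}^{N−1} (1 + τ ∂₄L_j)) ·
  (∂₂L(kτ, q_k, q_{k+1}, s_k) + ∂₃L((k−1)τ, q_{k−1}, q_k, s_{k−1}) (1 + τ ∂₄L_k))`. -/
theorem discrete_herglotz_action_derivative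
    (τ sinit : ℝ) (hτ : 0 < τ) (L : ℝ → ℝ → ℝ → ℝ → ℝ)
    (hL : ContDiff ℝ (⊤ : ℕ∞) fun x : ℝ × ℝ × ℝ × ℝ => L x.1 x.2.1 x.2.2.1 x.2.2.2)
    (N : ℕ) (hN : 2 ≤ N) (q : ℕ → ℝ) (k : ℕ) (hk1 : 1 ≤ k) (hk2 : k ≤ N - 1) :
    HasDerivAt (fun x => discS τ sinit L (Function.update q k x) N)
      (τ * (∏ j ∈ Finset.Ico (k + 1) N,
          (1 + τ * D4L L (j * τ) (q j) (q (j + 1)) (discS τ sinit L q j))) *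
        (D2L L (k * τ) (q k) (q (k + 1)) (discS τ sinit L q k) +
          D3L L ((k - 1 : ℕ) * τ) (q (k - 1)) (q k) (discS τ sinit L q (k - 1)) *
            (1 + τ * D4L L (k * τ) (q k) (q (k + 1)) (discS τ sinit L q k))))
      (q k) := by
  set F : ℝ × ℝ × ℝ × ℝ → ℝ := fun x => L x.1 x.2.1 x.2.2.1 x.2.2.2 with hFdef
  have hF : Differentiable ℝ F := hL.differentiable (by simp)
  have hupd : Function.update q k (q k) = q := Function.update_eq_self k q
  set j := k - 1 with hjdef
  have hjk : j + 1 = k := Nat.succ_pred_eq_of_pos hk1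
  -- the bracket
  set B : ℝ := D2L L (k * τ) (q k) (q (k + 1)) (discS τ sinit L q k) +
      D3L L ((k - 1 : ℕ) * τ) (q (k - 1)) (q k) (discS τ sinit L q (k - 1)) *
        (1 + τ * D4L L (k * τ) (q k) (q (k + 1)) (discS τ sinit L q k)) with hBdef
  -- derivative of s_k
  have hsk : HasDerivAt (fun x => discS τ sinit L (Function.update q k x) k)
      (τ * D3L L (j * τ) (q j) (q k) (discS τ sinit L q j)) (q k) := by
    have hfun : (fun x => discS τ sinit L (Function.update q k x) k) =
        fun x => discS τ sinit L q j +
          τ * L (j * τ) (q j) x (discS τ sinit L q j) := by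
      funext x
      have e1 : discS τ sinit L (Function.update q k x) j = discS τ sinit L q j :=
        discS_update_lt τ sinit L q k x j (by omega)
      have e2 : Function.update q k x j = q j :=
        Function.update_of_ne (by omega : j ≠ k) _ _
      have e3 : Function.update q k x k = x := Function.update_self _ _ _
      calc discS τ sinit L (Function.update q k x) k
          = discS τ sinit L (Function.update q k x) (j + 1) := by rw [hjk]
        _ = discS τ sinit L (Function.update q k x) j +
              τ * L ((j : ℝ) * τ) (Function.update q k x j)
                (Function.update q k x (j + 1))
                (discS τ sinit L (Function.update q k x) j) := rfl
        _ = discS τ sinit L q j + τ * L ((j : ℝ) * τ) (q j) x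
              (discS τ sinit L q j) := by rw [e1, e2, hjk, e3]
    rw [hfun]
    have hd : HasDerivAt (fun x => L (j * τ) (q j) x (discS τ sinit L q j))
        (D3L L (j * τ) (q j) (q k) (discS τ sinit L q j)) (q k) := by
      have hdiff : Differentiable ℝ
          (fun x : ℝ => F ((j : ℝ) * τ, q j, x, discS τ sinit L q j)) :=
        hF.comp (Differentiable.prodMk (differentiable_const _) (Differentiable.prodMk (differentiable_const _)
          (differentiable_id.prodMk (differentiable_const _))))
      exact (hdiff (q k)).hasDerivAt
    exact (hd.const_mul τ).const_add _
  -- main induction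
  have main : ∀ m, k + 1 ≤ m →
      HasDerivAt (fun x => discS τ sinit L (Function.update q k x) m)
        (τ * (∏ i ∈ Finset.Ico (k + 1) m,
          (1 + τ * D4L L (i * τ) (q i) (q (i + 1)) (discS τ sinit L q i))) * B) (q k) := by
    intro m hm
    induction m, hm using Nat.le_induction with
    | base =>
      have hfun : (fun x => discS τ sinit L (Function.update q k x) (k + 1)) =
          fun x => discS τ sinit L (Function.update q k x) k +
            τ * F ((k : ℝ) * τ, x, q (k + 1),
              discS τ sinit L (Function.update q k x) k) := by
        funext x
        simp only [discS, hFdef]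
        rw [Function.update_self, Function.update_of_ne (by omega : k + 1 ≠ k)]
      rw [hfun]
      have hkey := hasDerivAt_comp4 F hF ((k : ℝ) * τ) (fun x => x) (fun _ => q (k + 1))
        (fun x => discS τ sinit L (Function.update q k x) k) 1 0 _ (q k)
        (hasDerivAt_id _) (hasDerivAt_const _ _) hsk
      simp only [hupd] at hkey
      have htot := hsk.add (hkey.const_mul τ)
      convert htot using 1
      case e'_4 => rfl
      case e'_5 => rfl
      case e'_8 => rfl
      rw [Finset.Ico_self, Finset.prod_empty, hBdef]
      simp only [D2L, D3L, D4L, hFdef, hjdef]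
      push_cast
      ring
    | succ m hm ih =>
      have hfun : (fun x => discS τ sinit L (Function.update q k x) (m + 1)) =
          fun x => discS τ sinit L (Function.update q k x) m +
            τ * F ((m : ℝ) * τ, q m, q (m + 1),
              discS τ sinit L (Function.update q k x) m) := by
        funext x
        simp only [discS, hFdef]
        rw [Function.update_of_ne (by omega : m ≠ k),
          Function.update_of_ne (by omega : m + 1 ≠ k)]
      rw [hfun]
      have hkey := hasDerivAt_comp4 F hF ((m : ℝ) * τ) (fun _ => q m) (fun _ => q (m + 1))
        (fun x => discS τ sinit L (Function.update q k x) m) 0 0 _ (q k)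
        (hasDerivAt_const _ _) (hasDerivAt_const _ _) ih
      simp only [hupd] at hkey
      have htot := ih.add (hkey.const_mul τ)
      convert htot using 1
      case e'_4 => rfl
      case e'_5 => rfl
      case e'_8 => rfl
      rw [Finset.prod_Ico_succ_top hm]
      simp only [D4L, hFdef]
      ring
  have hkN : k + 1 ≤ N := by omega
  exact main N hkN
end

section
/- Let L : ℝ × ℝ × ℝ × ℝ → ℝ be smooth, τ > 0, N ≥ 2, and for a discrete curve q : {0, …, N} → ℝ define s recursively by s₀ = s_init and s_{k+1} = s_k + τ L(kτ, q_k, q_{k+1}, s_k). Assume 1 + τ ∂₄L(jτ, q_j, q_{j+1}, s_j) ≠ 0 for all 0 ≤ j ≤ N − 1. Then q is a critical discrete curve (i.e. ∂s_N/∂q_k = 0 for all 1 ≤ k ≤ N − 1) if and only if for all 1 ≤ k ≤ N − 1 the discrete generalized Euler–Lagrange equation ∂₂L(kτ, q_k, q_{k+1}, s_k) + ∂₃L((k−1)τ, q_{k−1}, q_k, s_{k−1}) · (1 + τ ∂₄L(kτ, q_k, q_{k+1}, s_k)) = 0 holds, which is equivalent to the momentum matching condition p_k⁻ = p_k⁺,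 where p_k⁻ = ∂₃L((k−1)τ, q_{k−1}, q_k, s_{k−1}) and p_k⁺ = −∂₂L(kτ, q_k, q_{k+1}, s_k) / (1 + τ ∂₄L(kτ, q_k, q_{k+1}, s_k)). -/
/-- Chain rule for a smooth function of four real variables along three real curves. -/
lemma hasDerivAt_comp4_s4 (L : ℝ → ℝ → ℝ → ℝ → ℝ)
    (hL : ContDiff ℝ (⊤ : ℕ∞) fun x : ℝ × ℝ × ℝ × ℝ => L x.1 x.2.1 x.2.2.1 x.2.2.2)
    (t : ℝ) {a b c : ℝ → ℝ} {a' b' c' x : ℝ}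
    (ha : HasDerivAt a a' x) (hb : HasDerivAt b b' x) (hc : HasDerivAt c c' x) :
    HasDerivAt (fun y => L t (a y) (b y) (c y))
      (D2L L t (a x) (b x) (c x) * a' + D3L L t (a x) (b x) (c x) * b'
        + D4L L t (a x) (b x) (c x) * c') x := by
  set F : ℝ × ℝ × ℝ × ℝ → ℝ := fun p => L p.1 p.2.1 p.2.2.1 p.2.2.2 with hFdef
  have hF : DifferentiableAt ℝ F (t, a x, b x, c x) :=
    (hL.differentiable (by simp)).differentiableAt
  set f := fderiv ℝ F (t, a x, b x, c x) with hfdef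
  have h2 : D2L L t (a x) (b x) (c x) = f (0, 1, 0, 0) := by
    have hγ : HasDerivAt (fun y : ℝ => ((t, y, b x, c x) : ℝ × ℝ × ℝ × ℝ))
        ((0, 1, 0, 0) : ℝ × ℝ × ℝ × ℝ) (a x) :=
      (hasDerivAt_const _ t).prodMk ((hasDerivAt_id _).prodMk
        ((hasDerivAt_const _ _).prodMk (hasDerivAt_const _ _)))
    have := hF.hasFDerivAt.comp_hasDerivAt (a x) hγ
    exact this.deriv
  have h3 : D3L L t (a x) (b x) (c x) = f (0, 0, 1, 0) := by
    have hγ : HasDerivAt (fun y : ℝ => ((t, a x, y, c x) : ℝ × ℝ × ℝ × ℝ))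
        ((0, 0, 1, 0) : ℝ × ℝ × ℝ × ℝ) (b x) :=
      (hasDerivAt_const _ t).prodMk ((hasDerivAt_const _ _).prodMk
        ((hasDerivAt_id _).prodMk (hasDerivAt_const _ _)))
    have := hF.hasFDerivAt.comp_hasDerivAt (b x) hγ
    exact this.deriv
  have h4 : D4L L t (a x) (b x) (c x) = f (0, 0, 0, 1) := by
    have hγ : HasDerivAt (fun y : ℝ => ((t, a x, b x, y) : ℝ × ℝ × ℝ × ℝ))
        ((0, 0, 0, 1) : ℝ × ℝ × ℝ × ℝ) (c x) :=
      (hasDerivAt_const _ t).prodMk ((hasDerivAt_const _ _).prodMk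
        ((hasDerivAt_const _ _).prodMk (hasDerivAt_id _)))
    have := hF.hasFDerivAt.comp_hasDerivAt (c x) hγ
    exact this.deriv
  have hγ : HasDerivAt (fun y : ℝ => ((t, a y, b y, c y) : ℝ × ℝ × ℝ × ℝ))
      ((0, a', b', c') : ℝ × ℝ × ℝ × ℝ) x :=
    (hasDerivAt_const _ t).prodMk (ha.prodMk (hb.prodMk hc))
  have hcomp := hF.hasFDerivAt.comp_hasDerivAt x hγ
  have key : f ((0, a', b', c') : ℝ × ℝ × ℝ × ℝ)
      = a' * f (0, 1, 0, 0) + b' * f (0, 0, 1, 0) + c' * f (0, 0, 0, 1) := by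
    have hv : ((0, a', b', c') : ℝ × ℝ × ℝ × ℝ)
        = a' • ((0, 1, 0, 0) : ℝ × ℝ × ℝ × ℝ) + b' • (0, 0, 1, 0) + c' • (0, 0, 0, 1) := by
      simp [Prod.ext_iff]
    rw [hv, f.map_add, f.map_add, f.map_smul, f.map_smul, f.map_smul]
    simp [smul_eq_mul]
  rw [h2, h3, h4]
  have hval : (f ((0, a', b', c') : ℝ × ℝ × ℝ × ℝ))
      = f (0, 1, 0, 0) * a' + f (0, 0, 1, 0) * b' + f (0, 0, 0, 1) * c' := by
    rw [key]; ring
  exact hval ▸ hcomp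

/-- `discS` at step `j` only depends on `q` through the values `q 0, …, q j`. -/
lemma discS_congr (τ sinit : ℝ) (L : ℝ → ℝ → ℝ → ℝ → ℝ) (q q' : ℕ → ℝ) :
    ∀ j, (∀ i ≤ j, q i = q' i) → discS τ sinit L q j = discS τ sinit L q' j := by
  intro j
  induction j with
  | zero => intro _; rfl
  | succ n ih =>
    intro h
    have h1 := ih (fun i hi => h i (hi.trans (Nat.le_succ n)))
    simp [discS, h1, h n (Nat.le_succ n), h (n + 1) le_rfl]

/-- Assuming `1 + τ ∂₄L ≠ 0` along the discrete curve, the curve is critical for the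
discrete Herglotz variational principle iff the discrete generalized Euler–Lagrange
equations hold, and each such equation is equivalent to the momentum matching
condition `p_k⁻ = p_k⁺`. -/
theorem discrete_herglotz_critical_iff_EL_iff_momentum_matching
    (τ sinit : ℝ) (hτ : 0 < τ) (L : ℝ → ℝ → ℝ → ℝ → ℝ)
    (hL : ContDiff ℝ (⊤ : ℕ∞) fun x : ℝ × ℝ × ℝ × ℝ => L x.1 x.2.1 x.2.2.1 x.2.2.2)
    (N : ℕ) (hN : 2 ≤ N) (q : ℕ → ℝ)
    (hnz : ∀ j ≤ N - 1,
      1 + τ * D4L L (j * τ) (q j) (q (j + 1)) (discS τ sinit L q j) ≠ 0) :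
    -- criticality ↔ discrete generalized Euler–Lagrange equations
    ((∀ k, 1 ≤ k → k ≤ N - 1 →
        deriv (fun x => discS τ sinit L (Function.update q k x) N) (q k) = 0) ↔
      (∀ k, 1 ≤ k → k ≤ N - 1 →
        D2L L (k * τ) (q k) (q (k + 1)) (discS τ sinit L q k) +
          D3L L ((k - 1 : ℕ) * τ) (q (k - 1)) (q k) (discS τ sinit L q (k - 1)) *
            (1 + τ * D4L L (k * τ) (q k) (q (k + 1)) (discS τ sinit L q k)) = 0)) ∧
    -- each Euler–Lagrange equation ↔ momentum matching `p_k⁻ = p_k⁺`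
    (∀ k, 1 ≤ k → k ≤ N - 1 →
      (D2L L (k * τ) (q k) (q (k + 1)) (discS τ sinit L q k) +
          D3L L ((k - 1 : ℕ) * τ) (q (k - 1)) (q k) (discS τ sinit L q (k - 1)) *
            (1 + τ * D4L L (k * τ) (q k) (q (k + 1)) (discS τ sinit L q k)) = 0 ↔
        D3L L ((k - 1 : ℕ) * τ) (q (k - 1)) (q k) (discS τ sinit L q (k - 1)) =
          -(D2L L (k * τ) (q k) (q (k + 1)) (discS τ sinit L q k)) /
            (1 + τ * D4L L (k * τ) (q k) (q (k + 1)) (discS τ sinit L q k)))) := by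
  have hnz' : ∀ i < N,
      1 + τ * D4L L (i * τ) (q i) (q (i + 1)) (discS τ sinit L q i) ≠ 0 :=
    fun i hi => hnz i (by omega)
  -- the key pointwise equivalence: criticality at `k` ↔ EL equation at `k`
  have key : ∀ k, 1 ≤ k → k ≤ N - 1 →
      (deriv (fun x => discS τ sinit L (Function.update q k x) N) (q k) = 0 ↔
        D2L L (k * τ) (q k) (q (k + 1)) (discS τ sinit L q k) +
          D3L L ((k - 1 : ℕ) * τ) (q (k - 1)) (q k) (discS τ sinit L q (k - 1)) *
            (1 + τ * D4L L (k * τ) (q k) (q (k + 1)) (discS τ sinit L q k)) = 0) := by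
    intro k hk1 hk2
    obtain ⟨m, rfl⟩ : ∃ m, k = m + 1 := ⟨k - 1, by omega⟩
    simp only [Nat.add_sub_cancel]
    set k := m + 1 with hk
    have hkN : k + 1 ≤ N := by omega
    have hupdate : Function.update q k (q k) = q := Function.update_eq_self k q
    -- s_j is unaffected by the variation for j < k
    have hconstlt : ∀ j < k, ∀ x : ℝ,
        discS τ sinit L (Function.update q k x) j = discS τ sinit L q j := by
      intro j hj x
      exact discS_congr τ sinit L _ q j
        (fun i hi => Function.update_of_ne (by omega) x q)
    -- derivative of s_k
    have hsk : HasDerivAt (fun x => discS τ sinit L (Function.update q k x) k)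
        (τ * D3L L (m * τ) (q m) (q k) (discS τ sinit L q m)) (q k) := by
      have heq : (fun x => discS τ sinit L (Function.update q k x) k)
          = fun x => discS τ sinit L q m
              + τ * L (m * τ) (q m) x (discS τ sinit L q m) := by
        funext x
        show discS τ sinit L (Function.update q k x) (m + 1) = _
        rw [discS, hconstlt m (by omega) x,
          Function.update_of_ne (show m ≠ k by omega),
          Function.update_self]
      rw [heq]
      have hg := hasDerivAt_comp4_s4 L hL (m * τ)
        (hasDerivAt_const (q k) (q m)) (hasDerivAt_id (q k))
        (hasDerivAt_const (q k) (discS τ sinit L q m))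
      have hg' : HasDerivAt (fun y => L (m * τ) (q m) y (discS τ sinit L q m))
          (D3L L (m * τ) (q m) (q k) (discS τ sinit L q m)) (q k) := by
        convert hg using 1
        simp only [id_eq, id]
        ring_nf
        rfl
      exact (hasDerivAt_const (q k) _).add (hg'.const_mul τ) |>.congr_deriv (by ring)
    -- the EL quantity
    set EL : ℝ := D2L L (k * τ) (q k) (q (k + 1)) (discS τ sinit L q k) +
        D3L L (m * τ) (q m) (q k) (discS τ sinit L q m) *
          (1 + τ * D4L L (k * τ) (q k) (q (k + 1)) (discS τ sinit L q k)) with hEL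
    -- derivative of s_j for j ≥ k+1
    have main : ∀ n, k + 1 + n ≤ N →
        HasDerivAt (fun x => discS τ sinit L (Function.update q k x) (k + 1 + n))
          (τ * EL * ∏ i ∈ Finset.Ico (k + 1) (k + 1 + n),
            (1 + τ * D4L L (i * τ) (q i) (q (i + 1)) (discS τ sinit L q i))) (q k) := by
      intro n
      induction n with
      | zero =>
        intro _
        have heq : (fun x => discS τ sinit L (Function.update q k x) (k + 1))
            = fun x => discS τ sinit L (Function.update q k x) k
                + τ * L (k * τ) x (q (k + 1))
                    (discS τ sinit L (Function.update q k x) k) := by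
          funext x
          rw [show (k + 1 : ℕ) = k + 1 from rfl, discS,
            Function.update_self, Function.update_of_ne (show k + 1 ≠ k by omega)]
        simp only [Nat.add_zero, Finset.Ico_self, Finset.prod_empty, mul_one]
        rw [heq]
        have hcomp := hasDerivAt_comp4_s4 L hL (k * τ)
          (hasDerivAt_id (q k)) (hasDerivAt_const (q k) (q (k + 1))) hsk
        have := hsk.add (hcomp.const_mul τ)
        refine this.congr_deriv ?_
        simp only [hupdate, id_eq]
        rw [hEL]; ring
      | succ n ih =>
        intro hle
        have hle' : k + 1 + n ≤ N := by omega
        have ihh := ih hle'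
        have heq : (fun x => discS τ sinit L (Function.update q k x) (k + 1 + (n + 1)))
            = fun x => discS τ sinit L (Function.update q k x) (k + 1 + n)
                + τ * L (((k + 1 + n : ℕ) : ℝ) * τ) (q (k + 1 + n)) (q (k + 1 + n + 1))
                    (discS τ sinit L (Function.update q k x) (k + 1 + n)) := by
          funext x
          rw [show k + 1 + (n + 1) = (k + 1 + n) + 1 from rfl, discS,
            Function.update_of_ne (show k + 1 + n ≠ k by omega),
            Function.update_of_ne (show k + 1 + n + 1 ≠ k by omega)]
        rw [heq]
        have hcomp := hasDerivAt_comp4_s4 L hL (((k + 1 + n : ℕ) : ℝ) * τ)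
          (hasDerivAt_const (q k) (q (k + 1 + n)))
          (hasDerivAt_const (q k) (q (k + 1 + n + 1))) ihh
        have := ihh.add (hcomp.const_mul τ)
        refine this.congr_deriv ?_
        rw [show k + 1 + (n + 1) = (k + 1 + n) + 1 from rfl,
          Finset.prod_Ico_succ_top (by omega : k + 1 ≤ k + 1 + n)]
        simp only [hupdate]
        ring
    obtain ⟨n, hn⟩ : ∃ n, k + 1 + n = N := ⟨N - (k + 1), by omega⟩
    have hD := main n (by omega)
    rw [hn] at hD
    rw [hD.deriv]
    have hP : (∏ i ∈ Finset.Ico (k + 1) N,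
        (1 + τ * D4L L (i * τ) (q i) (q (i + 1)) (discS τ sinit L q i))) ≠ 0 := by
      rw [Finset.prod_ne_zero_iff]
      intro i hi
      exact hnz' i (Finset.mem_Ico.mp hi).2
    constructor
    · intro h
      rcases mul_eq_zero.mp h with h' | h'
      · rcases mul_eq_zero.mp h' with h'' | h''
        · exact absurd h'' (ne_of_gt hτ)
        · exact h''
      · exact absurd h' hP
    · intro h
      have hEL0 : EL = 0 := h
      rw [hEL0]; ring
  constructor
  · constructor
    · intro h k hk1 hk2
      exact (key k hk1 hk2).mp (h k hk1 hk2)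
    · intro h k hk1 hk2
      exact (key k hk1 hk2).mpr (h k hk1 hk2)
  · intro k hk1 hk2
    have hA := hnz k hk2
    rw [eq_div_iff hA]
    constructor <;> intro h <;> linarith
end
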